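/- For every even integer m ≥ 6, the graph H_m is Hamiltonian, i.e., there exists a cycle in H_m that visits every one of its 2m+1 vertices exactly once. -/

import Mathlib

open SimpleGraph

/-- Vertex type for the graphs on `2m+1` vertices: `Sum.inl i` is the vertex `pᵢ`,
`Sum.inr (Sum.inl i)` is the vertex `qᵢ` (indices taken modulo `m`),
and `Sum.inr (Sum.inr ())` is the apex vertex `a`. -/
abbrev GVert (m : ℕ) := Sum (ZMod m) (Sum (ZMod m) Unit)

/-- The vertex `pᵢ`. -/
def pV {m : ℕ} (i : ZMod m) : GVert m := Sum.inl i

/-- The vertex `qᵢ`. -/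
def qV {m : ℕ} (i : ZMod m) : GVert m := Sum.inr (Sum.inl i)

/-- The apex vertex `a`. -/
def aV (m : ℕ) : GVert m := Sum.inr (Sum.inr ())

/-- The graph `H_m` (intended for even `m ≥ 6`): edges are `a qᵢ` for all `i`,
`pᵢ pᵢ₊₁` for all `i`, and `pᵢ q_{i + (2k-1)}` for all `i` and `0 ≤ k ≤ (m-2)/2`,
all indices taken modulo `m`. -/
def HGraph (m : ℕ) : SimpleGraph (GVert m) :=
  SimpleGraph.fromRel (fun u v =>
    (∃ i : ZMod m, u = aV m ∧ v = qV i) ∨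
    (∃ i : ZMod m, u = pV i ∧ v = pV (i + 1)) ∨
    (∃ (i : ZMod m) (k : ℕ), k ≤ (m - 2) / 2 ∧
      u = pV i ∧ v = qV (i + (2 * (k : ZMod m) - 1))))


/-!
The cycle `a, q₁, p₂, q₃, …, q_{m-1}, p_m, p₁, q₂, p₃, …, p_{m-1}, q_m, a` is Hamiltonian. Besides
`a q₁`, `q_m a` and `p_m p₁` it only uses the edges `pᵢ q_{i-1}` and `pᵢ q_{i+1}` (`k = 0, 1`), and
since `m` is even the second zigzag visits exactly the vertices the first one misses. Enumerating
the cycle gives a bijection `Fin (2m+1) → V(H_m)` mapping consecutive indices to adjacent vertices,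
and the Hamiltonian cycle is the image of the cycle of `cycleGraph (2m+1)`.
-/

namespace SimpleGraph

theorem cycleGraph.isHamiltonianCycle_cycle (n : ℕ) : (cycleGraph.cycle n).IsHamiltonianCycle :=
  Walk.isHamiltonianCycle_iff_isCycle_and_length_eq.mpr ⟨cycleGraph.isCycle_cycle, by simp⟩

theorem exists_isHamiltonianCycle_of_bijective {V : Type*} [DecidableEq V] {G : SimpleGraph V}
    {n : ℕ} [NeZero n] (hn : 3 ≤ n) (f : Fin n → V) (hf : Function.Bijective f)
    (hadj : ∀ i, G.Adj (f i) (f (i + 1))) :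
    ∃ (v : V) (p : G.Walk v v), p.IsHamiltonianCycle := by
  obtain ⟨k, rfl⟩ : ∃ k, n = k + 3 := ⟨n - 3, by omega⟩
  let φ : cycleGraph (k + 3) →g G :=
    ⟨f, fun {u v} huv => by
      rcases cycleGraph_adj.mp huv with h | h
      · rw [sub_eq_iff_eq_add'] at h
        exact h ▸ (hadj v).symm
      · rw [sub_eq_iff_eq_add'] at h
        exact h ▸ hadj u⟩
  exact ⟨_, _, (cycleGraph.isHamiltonianCycle_cycle k).map (f := φ) hf⟩

end SimpleGraph

theorem eq_or_eq_add_of_natCast_eq {m a b : ℕ} (hab : a ≤ b) (hb : b < a + 2 * m)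
    (h : (a : ZMod m) = b) : b = a ∨ b = a + m := by
  obtain ⟨c, hc⟩ : m ∣ b - a :=
    (Nat.modEq_iff_dvd' hab).mp ((ZMod.natCast_eq_natCast_iff a b m).mp h)
  have hc2 : c < 2 := Nat.lt_of_mul_lt_mul_left (a := m) (by omega)
  interval_cases c <;> omega

section HGraph

variable {m : ℕ}

theorem hGraph_adj_aV_qV (i : ZMod m) : (HGraph m).Adj (aV m) (qV i) :=
  (fromRel_adj _ _ _).mpr ⟨by simp [aV, qV], .inl (.inl ⟨i, rfl, rfl⟩)⟩

theorem hGraph_adj_pV_pV_add_one (hm : 2 ≤ m) (i : ZMod m) :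
    (HGraph m).Adj (pV i) (pV (i + 1)) := by
  have : Fact (1 < m) := ⟨hm⟩
  refine (fromRel_adj _ _ _).mpr ⟨?_, .inl (.inr (.inl ⟨i, rfl, rfl⟩))⟩
  simp [pV]

theorem hGraph_adj_pV_qV_sub_one (i : ZMod m) : (HGraph m).Adj (pV i) (qV (i - 1)) :=
  (fromRel_adj _ _ _).mpr ⟨by simp [pV, qV],
    .inl (.inr (.inr ⟨i, 0, Nat.zero_le _, rfl, by simp [sub_eq_add_neg]⟩))⟩

theorem hGraph_adj_pV_qV_add_one (hm : 4 ≤ m) (i : ZMod m) :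
    (HGraph m).Adj (pV i) (qV (i + 1)) :=
  (fromRel_adj _ _ _).mpr ⟨by simp [pV, qV],
    .inl (.inr (.inr ⟨i, 1, by omega, rfl, by norm_num⟩))⟩

/-- The `j`-th vertex of the cycle above, for `j ≤ 2 * m`. -/
def hGraphCycleVert (m j : ℕ) : GVert m :=
  if j = 0 then aV m else if (Odd j ↔ j ≤ m) then qV j else pV j

theorem hGraphCycleVert_adj_succ (h4 : 4 ≤ m) (heven : Even m) {j : ℕ} (hj : j < 2 * m) :
    (HGraph m).Adj (hGraphCycleVert m j) (hGraphCycleVert m (j + 1)) := by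
  rcases Nat.eq_zero_or_pos j with rfl | hj0
  · simpa [hGraphCycleVert, show 1 ≤ m by omega] using hGraph_adj_aV_qV (1 : ZMod m)
  by_cases hjm : j = m
  · subst hjm
    have hodd : ¬ Odd j := Nat.not_odd_iff_even.mpr heven
    have heven' : ¬ Even (j + 1) := by simpa [Nat.even_add_one] using heven
    simpa [hGraphCycleVert, hj0.ne', hodd, heven'] using
      hGraph_adj_pV_pV_add_one (by omega) (j : ZMod j)
  have hflip : (Odd (j + 1) ↔ j + 1 ≤ m) ↔ ¬ (Odd j ↔ j ≤ m) := by
    simp only [Nat.odd_iff]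
    omega
  unfold hGraphCycleVert
  rw [if_neg hj0.ne', if_neg j.succ_ne_zero]
  by_cases hq : Odd j ↔ j ≤ m
  · rw [if_pos hq, if_neg (by tauto)]
    convert (hGraph_adj_pV_qV_sub_one _).symm using 2
    push_cast
    ring
  · rw [if_neg hq, if_pos (by tauto)]
    convert hGraph_adj_pV_qV_add_one h4 (j : ZMod m) using 2
    push_cast
    rfl

theorem hGraphCycleVert_two_mul_adj_zero (hm : 0 < m) :
    (HGraph m).Adj (hGraphCycleVert m (2 * m)) (hGraphCycleVert m 0) := by
  have h : ¬ 2 * m ≤ m := by omega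
  simpa [hGraphCycleVert, hm.ne', h] using (hGraph_adj_aV_qV _).symm

theorem hGraphCycleVert_adj_fin_succ (h4 : 4 ≤ m) (heven : Even m) (i : Fin (2 * m + 1)) :
    (HGraph m).Adj (hGraphCycleVert m i) (hGraphCycleVert m (i + 1 : Fin (2 * m + 1))) := by
  rcases eq_or_ne i (Fin.last _) with rfl | hi
  · simpa using hGraphCycleVert_two_mul_adj_zero (m := m) (by omega)
  · rw [Fin.val_add_one_of_lt (Fin.lt_last_iff_ne_last.mpr hi)]
    exact hGraphCycleVert_adj_succ h4 heven (Fin.val_lt_last hi)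

theorem hGraphCycleVert_injOn (heven : Even m) :
    Set.InjOn (hGraphCycleVert m) (Set.Iic (2 * m)) := by
  intro j hj j' hj' h
  wlog hle : j ≤ j' generalizing j j'
  · exact (this hj' hj h.symm (by omega)).symm
  simp only [Set.mem_Iic] at hj hj'
  unfold hGraphCycleVert at h
  split_ifs at h <;> simp only [aV, pV, qV, reduceCtorEq, Sum.inl.injEq, Sum.inr.injEq] at h
  · omega
  all_goals
    rcases eq_or_eq_add_of_natCast_eq hle (by omega) h with rfl | rfl
    · rfl
    · have hm2 := Nat.even_iff.mp heven
      simp only [Nat.odd_iff] at *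
      omega

end HGraph

/-- For every even integer `m ≥ 6`, the graph `H_m` is Hamiltonian:
there exists a cycle visiting every vertex exactly once. -/
theorem hGraph_hamiltonian (m : ℕ) (h6 : 6 ≤ m) (heven : Even m) :
    ∃ (v : GVert m) (c : (HGraph m).Walk v v), c.IsHamiltonianCycle := by
  have : NeZero m := ⟨by omega⟩
  let f : Fin (2 * m + 1) → GVert m := fun i => hGraphCycleVert m i
  have hinj : Function.Injective f := fun i i' h =>
    Fin.ext (hGraphCycleVert_injOn heven (Nat.lt_succ_iff.mp i.isLt) (Nat.lt_succ_iff.mp i'.isLt) h)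
  have hbij : Function.Bijective f := (Fintype.bijective_iff_injective_and_card f).mpr
    ⟨hinj, by simp only [Fintype.card_fin, Fintype.card_sum, ZMod.card, Fintype.card_unit]; omega⟩
  exact exists_isHamiltonianCycle_of_bijective (by omega) f hbij
    (hGraphCycleVert_adj_fin_succ (by omega) heven)
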